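/- arXiv:2212.07604 — 5 statements merged into one kernel-verified Lean document; each statement's English description precedes it below -/
import Mathlib

section
/- Let n and m be positive integers with n ≥ m + 3, and suppose every unordered pair of distinct elements of a set of n objects is assigned to one of m bins (i.e., there is a function f from 2-element subsets of Fin n to Fin m). Then there exist two disjoint 2-element subsets assigned to the same bin: there are a, b, c, d in Fin n with {a,b} ∩ {c,d} = ∅ and f {a,b} = f {c,d}. -/
/-!
Colour the pairs so that no two disjoint pairs share a colour. Then every colour class is an
intersecting family of pairs, hence either a star (all its pairs share a vertex) or it has at most
three members (it lies inside a triangle). A star colour can be discarded together with its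
centre, which lowers both the number of vertices and the number of colours by one. Once no star
remains, the `choose n 2` pairs are covered by `m` classes of size at most three, and
`3 * m < choose (m + 3) 2`.
-/

open Finset

variable {α β : Type*} [DecidableEq α]

namespace Finset

theorem subset_union_of_card_eq_two {e s t : Finset α} (he : #e = 2) (hs : ¬Disjoint e s)
    (ht : ¬Disjoint e t) (hst : Disjoint e (s ∩ t)) : e ⊆ s ∪ t := by
  obtain ⟨p, hpe, hps⟩ := not_disjoint_iff.mp hs
  obtain ⟨q, hqe, hqt⟩ := not_disjoint_iff.mp ht
  have hpq : p ≠ q := by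
    rintro rfl
    exact disjoint_left.mp hst hpe (mem_inter.mpr ⟨hps, hqt⟩)
  have hpair : {p, q} = e :=
    eq_of_subset_of_card_le (insert_subset hpe (singleton_subset_iff.mpr hqe))
      (by rw [he, card_pair hpq])
  rw [← hpair]
  exact insert_subset (mem_union_left _ hps) (singleton_subset_iff.mpr (mem_union_right _ hqt))

end Finset

theorem Set.Intersecting.exists_forall_mem_or_card_le_three {𝒜 : Finset (Finset α)}
    (h𝒜 : (𝒜 : Set (Finset α)).Intersecting) (h2 : ∀ e ∈ 𝒜, #e = 2) :
    (∃ v, ∀ e ∈ 𝒜, v ∈ e) ∨ #𝒜 ≤ 3 := by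
  by_cases hstar : ∃ v, ∀ e ∈ 𝒜, v ∈ e
  · exact Or.inl hstar
  right
  push Not at hstar
  rcases 𝒜.eq_empty_or_nonempty with rfl | ⟨e₁, he₁⟩
  · simp
  obtain ⟨a, b, -, rfl⟩ := card_eq_two.mp (h2 _ he₁)
  obtain ⟨e₂, he₂, hae₂⟩ := hstar a
  obtain ⟨e₃, he₃, hbe₃⟩ := hstar b
  have hcore : {a, b} ∩ e₂ ∩ e₃ = ∅ := by
    ext x
    simp only [Finset.mem_inter, Finset.mem_insert, Finset.mem_singleton, Finset.notMem_empty,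
      iff_false]
    rintro ⟨⟨rfl | rfl, hx₂⟩, hx₃⟩ <;> contradiction
  have he₃sub : e₃ ⊆ {a, b} ∪ e₂ :=
    subset_union_of_card_eq_two (h2 _ he₃) (h𝒜 he₃ he₁) (h𝒜 he₃ he₂)
      (by rw [Finset.disjoint_iff_inter_eq_empty, Finset.inter_comm, hcore])
  have hsub : ∀ e ∈ 𝒜, e ⊆ {a, b} ∪ e₂ := by
    intro e he
    by_cases hdisj : Disjoint e ({a, b} ∩ e₂)
    · exact subset_union_of_card_eq_two (h2 _ he) (h𝒜 he he₁) (h𝒜 he he₂) hdisj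
    · refine (subset_union_of_card_eq_two (h2 _ he) hdisj (h𝒜 he he₃) ?_).trans
        (Finset.union_subset Finset.inter_subset_union he₃sub)
      rw [hcore]
      exact disjoint_empty_right e
  have hcard : #({a, b} ∪ e₂) ≤ 3 := by
    have := card_union_add_card_inter {a, b} e₂
    have := card_pos.mpr (Finset.not_disjoint_iff_nonempty_inter.mp (h𝒜 he₁ he₂))
    have := card_le_two (a := a) (b := b)
    have := h2 _ he₂
    omega
  calc #𝒜 ≤ #(({a, b} ∪ e₂).powersetCard 2) :=
        Finset.card_le_card fun e he ↦ mem_powersetCard.mpr ⟨hsub e he, h2 e he⟩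
    _ = (#({a, b} ∪ e₂)).choose 2 := card_powersetCard _ _
    _ ≤ (3 : ℕ).choose 2 := Nat.choose_le_choose _ hcard
    _ = 3 := rfl

theorem Nat.three_mul_lt_choose_add_three_two (k : ℕ) : 3 * k < (k + 3).choose 2 := by
  rw [Nat.choose_two_right, Nat.lt_div_iff_mul_lt' (Nat.even_mul_pred_self _).two_dvd]
  rw [show k + 3 - 1 = k + 2 by omega]
  nlinarith [sq_nonneg ((k : ℤ) - 1)]

theorem card_lt_card_add_three_of_forall_not_disjoint [DecidableEq β] (f : Finset α → β)
    (V : Finset α) (C : Finset β) (hf : ∀ e ∈ V.powersetCard 2, f e ∈ C)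
    (hdisj : ∀ e ∈ V.powersetCard 2, ∀ e' ∈ V.powersetCard 2, f e = f e' → ¬Disjoint e e') :
    #V < #C + 3 := by
  induction C using Finset.strongInduction generalizing V with
  | H C ih =>
  by_cases hstar : ∃ c ∈ C, ∃ v, ∀ e ∈ V.powersetCard 2, f e = c → v ∈ e
  · obtain ⟨c, hc, v, hv⟩ := hstar
    have hsub : (V.erase v).powersetCard 2 ⊆ V.powersetCard 2 :=
      powersetCard_mono (erase_subset v V)
    have hf' : ∀ e ∈ (V.erase v).powersetCard 2, f e ∈ C.erase c := by
      intro e he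
      refine mem_erase.mpr ⟨fun hec ↦ ?_, hf e (hsub he)⟩
      exact (notMem_erase v V) ((mem_powersetCard.mp he).1 (hv e (hsub he) hec))
    have := ih (C.erase c) (erase_ssubset hc) (V.erase v) hf'
      fun e he e' he' ↦ hdisj e (hsub he) e' (hsub he')
    have := pred_card_le_card_erase (s := V) (a := v)
    have := card_erase_of_mem hc
    have := card_pos.mpr ⟨c, hc⟩
    omega
  · push Not at hstar
    by_contra! hVC
    have hclass : ∀ c ∈ C, #{e ∈ V.powersetCard 2 | f e = c} ≤ 3 := by
      intro c hc
      refine (Set.Intersecting.exists_forall_mem_or_card_le_three ?_ ?_).resolve_left ?_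
      · intro e he e' he'
        rw [mem_coe, mem_filter] at he he'
        exact hdisj e he.1 e' he'.1 (he.2.trans he'.2.symm)
      · exact fun e he ↦ (mem_powersetCard.mp (mem_filter.mp he).1).2
      · rintro ⟨v, hv⟩
        obtain ⟨e, he, hec, hve⟩ := hstar c hc v
        exact hve (hv e (mem_filter.mpr ⟨he, hec⟩))
    have hcount := calc (#V).choose 2
        _ = #(V.powersetCard 2) := (card_powersetCard _ _).symm
        _ = ∑ c ∈ C, #{e ∈ V.powersetCard 2 | f e = c} := card_eq_sum_card_fiberwise hf
        _ ≤ ∑ _c ∈ C, 3 := sum_le_sum hclass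
        _ = 3 * #C := by rw [sum_const, smul_eq_mul, mul_comm]
    have := Nat.three_mul_lt_choose_add_three_two #C
    have := Nat.choose_le_choose 2 hVC
    omega

theorem stmt_0_general (n m : ℕ) (hn : n ≥ m + 3)
    (f : {S : Finset (Fin n) // S.card = 2} → Fin m) :
    ∃ S T : {S : Finset (Fin n) // S.card = 2},
      S.1 ∩ T.1 = ∅ ∧ f S = f T := by
  obtain ⟨p, -, hp⟩ := exists_subset_card_eq (show 2 ≤ #(univ : Finset (Fin n)) by simp; omega)
  let g : Finset (Fin n) → Fin m := fun e ↦ if h : #e = 2 then f ⟨e, h⟩ else f ⟨p, hp⟩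
  have hg (S : {S : Finset (Fin n) // #S = 2}) : g S = f S := dif_pos S.2
  by_contra! h
  refine (card_lt_card_add_three_of_forall_not_disjoint g univ univ (by simp) ?_).not_ge
    (by simpa using hn)
  intro e he e' he' hgee' hdisj
  rw [mem_powersetCard] at he he'
  exact h ⟨e, he.2⟩ ⟨e', he'.2⟩ (disjoint_iff_inter_eq_empty.mp hdisj) (by rwa [← hg, ← hg])

theorem stmt_0 (n m : ℕ) (hm : 0 < m) (hn : n ≥ m + 3)
    (f : {S : Finset (Fin n) // S.card = 2} → Fin m) :
    ∃ S T : {S : Finset (Fin n) // S.card = 2},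
      S.1 ∩ T.1 = ∅ ∧ f S = f T :=
  stmt_0_general n m hn f
end

section
/- Suppose f assigns each 2-element subset of Fin (m+3) to one of m bins such that no two disjoint pairs get the same bin. Then the total number of pairs, C(m+3, 2), is at most (m+2) + (m+1) + ⋯ + 3 = C(m+3,2) − 3, a contradiction; equivalently, the sum over bins of the number of pairs in each bin is at most C(m+3,2) − 3 under the stated hypothesis, which is impossible since every pair lies in some bin. -/
/-!
A colour class is an intersecting family of 2-sets. If it is a star, i.e. all its pairs pass
through one point `v`, deleting `v` loses this colour and we induct on the ground set. Otherwise
it lies inside the three pairs of a triangle, so if no class is a star, `C(n, 2) ≤ 3k` for `n`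
points and `k` colours, which forces `n ≤ k + 2`.
-/

open Finset

theorem Nat.le_add_two_of_choose_two_le {n k : ℕ} (h : n.choose 2 ≤ 3 * k) : n ≤ k + 2 := by
  by_contra! hn
  have := Nat.choose_le_choose 2 (show k + 3 ≤ n by omega)
  simp only [Nat.choose_succ_succ, Nat.choose_one_right, Nat.choose_zero_right] at this
  omega

namespace Finset

variable {α κ : Type*} [DecidableEq α] [DecidableEq κ]

theorem exists_eq_pair_of_card_eq_two_of_mem {s : Finset α} (hs : #s = 2) {a : α} (ha : a ∈ s) :
    ∃ b, a ≠ b ∧ s = {a, b} := by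
  obtain ⟨x, y, hxy, rfl⟩ := card_eq_two.mp hs
  rcases mem_insert.mp ha with rfl | ha
  · exact ⟨y, hxy, rfl⟩
  · rw [mem_singleton.mp ha]
    exact ⟨x, hxy.symm, pair_comm _ _⟩

theorem subset_of_not_disjoint_triangle {a b c : α} (hab : a ≠ b) (hbc : b ≠ c) (hac : a ≠ c)
    {s : Finset α} (hs : #s = 2) (h₁ : ¬Disjoint s {a, b}) (h₂ : ¬Disjoint s {b, c})
    (h₃ : ¬Disjoint s {a, c}) : s ⊆ {a, b, c} := by
  obtain ⟨x, y, hxy, rfl⟩ := card_eq_two.mp hs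
  simp only [disjoint_insert_left, disjoint_singleton_left, mem_insert, mem_singleton]
    at h₁ h₂ h₃
  simp only [insert_subset_iff, singleton_subset_iff, mem_insert, mem_singleton]
  grind

theorem card_le_three_of_intersecting_of_sized_two {𝒜 : Finset (Finset α)}
    (h𝒜 : (𝒜 : Set (Finset α)).Sized 2) (hI : (𝒜 : Set (Finset α)).Intersecting)
    (hfree : ∀ v, ∃ s ∈ 𝒜, v ∉ s) : #𝒜 ≤ 3 := by
  obtain rfl | ⟨P, hP⟩ := 𝒜.eq_empty_or_nonempty
  · simp
  obtain ⟨a, b, hab, rfl⟩ := card_eq_two.mp (h𝒜 hP)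
  obtain ⟨Q, hQ, haQ⟩ := hfree a
  have hbQ : b ∈ Q := by simpa [disjoint_insert_right, haQ] using hI hQ hP
  obtain ⟨d, hbd, rfl⟩ := exists_eq_pair_of_card_eq_two_of_mem (h𝒜 hQ) hbQ
  have had : a ≠ d := by simp_all
  obtain ⟨R, hR, hbR⟩ := hfree b
  have haR : a ∈ R := by simpa [disjoint_insert_right, hbR] using hI hR hP
  obtain ⟨e, hae, rfl⟩ := exists_eq_pair_of_card_eq_two_of_mem (h𝒜 hR) haR
  obtain rfl : e = d := by
    have := hI hR hQ
    simp only [disjoint_insert_left, disjoint_singleton_left, mem_insert, mem_singleton] at this hbR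
    tauto
  have hsub : 𝒜 ⊆ powersetCard 2 {a, b, e} := fun s hs =>
    mem_powersetCard.2 ⟨subset_of_not_disjoint_triangle hab hbd had (h𝒜 hs)
      (hI hs hP) (hI hs hQ) (hI hs hR), h𝒜 hs⟩
  calc #𝒜 ≤ #(powersetCard 2 {a, b, e}) := card_le_card hsub
    _ = 3 := by rw [card_powersetCard, card_eq_three.2 ⟨a, b, e, hab, had, hbd, rfl⟩]; rfl

section KneserColoring

variable {f : Finset α → κ}
  (hf : ∀ s t, #s = 2 → #t = 2 → s ≠ t → f s = f t → ¬Disjoint s t)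
include hf

theorem card_filter_powersetCard_two_le_three {U : Finset α} {c : κ}
    (hfree : ∀ v, ∃ s ∈ U.powersetCard 2, f s = c ∧ v ∉ s) :
    #{s ∈ U.powersetCard 2 | f s = c} ≤ 3 := by
  have hsized : ((U.powersetCard 2).filter (f · = c) : Set (Finset α)).Sized 2 :=
    (Set.sized_powersetCard U 2).mono (coe_subset.2 (filter_subset _ _))
  refine card_le_three_of_intersecting_of_sized_two hsized (fun s hs t ht hdisj => ?_)
    fun v => ?_
  · by_cases hst : s = t
    · subst hst
      simpa [disjoint_self.1 hdisj] using hsized hs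
    · exact hf s t (hsized hs) (hsized ht) hst
        ((mem_filter.1 hs).2.trans (mem_filter.1 ht).2.symm) hdisj
  · obtain ⟨s, hs, hsc, hvs⟩ := hfree v
    exact ⟨s, mem_filter.2 ⟨hs, hsc⟩, hvs⟩

theorem card_le_card_image_powersetCard_two_add_two (U : Finset α) :
    #U ≤ #((U.powersetCard 2).image f) + 2 := by
  induction U using Finset.strongInduction with
  | H U ih =>
  set colors := (U.powersetCard 2).image f
  by_cases hstar : ∃ c ∈ colors, ∃ v, ∀ s ∈ U.powersetCard 2, f s = c → v ∈ s
  · obtain ⟨c, hc, v, hv⟩ := hstar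
    obtain ⟨s, hs, rfl⟩ := mem_image.1 hc
    have hvU : v ∈ U := (mem_powersetCard.1 hs).1 (hv s hs rfl)
    have hsub : ((U.erase v).powersetCard 2).image f ⊆ colors.erase (f s) := by
      intro c hc'
      obtain ⟨t, ht, rfl⟩ := mem_image.1 hc'
      obtain ⟨⟨htU, hvt⟩, ht2⟩ := And.imp_left subset_erase.1 (mem_powersetCard.1 ht)
      have ht' : t ∈ U.powersetCard 2 := mem_powersetCard.2 ⟨htU, ht2⟩
      exact mem_erase.2 ⟨fun hts => hvt (hv t ht' hts), mem_image_of_mem f ht'⟩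
    have hU := ih _ (erase_ssubset hvU)
    have hcolors := card_le_card hsub
    rw [card_erase_of_mem hvU] at hU
    rw [card_erase_of_mem hc] at hcolors
    have := card_pos.2 ⟨_, hc⟩
    omega
  · push Not at hstar
    apply Nat.le_add_two_of_choose_two_le
    calc (#U).choose 2 = #(U.powersetCard 2) := (card_powersetCard 2 U).symm
      _ = ∑ c ∈ colors, #{s ∈ U.powersetCard 2 | f s = c} := card_eq_sum_card_image f _
      _ ≤ ∑ _c ∈ colors, 3 := sum_le_sum fun c hc =>
        card_filter_powersetCard_two_le_three hf (hstar c hc)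
      _ = 3 * #colors := by rw [sum_const, smul_eq_mul, mul_comm]

end KneserColoring

end Finset

theorem stmt_3 (m : ℕ)
    (f : {S : Finset (Fin (m + 3)) // S.card = 2} → Fin m)
    (hf : ∀ S T : {S : Finset (Fin (m + 3)) // S.card = 2},
      S ≠ T → f S = f T → (S.1 ∩ T.1).Nonempty) :
    False := by
  let g : Finset (Fin (m + 3)) → Option (Fin m) := fun s =>
    if h : #s = 2 then some (f ⟨s, h⟩) else none
  have hg : ∀ s t, #s = 2 → #t = 2 → s ≠ t → g s = g t → ¬Disjoint s t := by
    intro s t hs ht hst hgst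
    simp only [g, hs, ht, dite_true, Option.some_inj] at hgst
    exact not_disjoint_iff_nonempty_inter.2 (hf ⟨s, hs⟩ ⟨t, ht⟩ (by simpa using hst) hgst)
  have himage : (univ.powersetCard 2).image g ⊆ univ.erase none := fun c hc => by
    obtain ⟨s, hs, rfl⟩ := mem_image.1 hc
    simp [g, (mem_powersetCard.1 hs).2]
  have hpoints := card_le_card_image_powersetCard_two_add_two hg univ
  have hcolors := card_le_card himage
  simp only [card_univ, Fintype.card_fin, Fintype.card_option, card_erase_of_mem (mem_univ _)]
    at hpoints hcolors
  omega
end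

section
/- Let s and d be positive integers and let s_0, s_1, …, s_{d−1} be nonnegative integers with s_0 + s_1 + ⋯ + s_{d−1} = s. Then there exists a cyclic shift of the sequence, i.e., an index r, such that setting t_i = s_{(i+r) mod d}, one has t_0 + t_1 + ⋯ + t_{j−1} ≥ j·s/d for every j = 1, …, d. -/
/-!
Extend the sequence `d`-periodically and let `S n` be its `n`-th partial sum. The discrepancy
`d * S n - n * s` is again `d`-periodic, so it attains a minimum at some `r`. Starting the
sequence at `r` then makes every partial sum `S (r + j) - S r` at least `j * s / d`.
-/

open Finset

namespace Function.Periodic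

variable {d : ℕ}

theorem exists_forall_le {α : Type*} [LinearOrder α] {g : ℕ → α} (hg : Periodic g d)
    (hd : 0 < d) : ∃ r, ∀ n, g r ≤ g n := by
  obtain ⟨r, -, hr⟩ := (range d).exists_min_image g ⟨0, mem_range.2 hd⟩
  exact ⟨r, fun n => hg.map_mod_nat n ▸ hr _ (mem_range.2 (Nat.mod_lt n hd))⟩

theorem sum_range_add_period {M : Type*} [AddCommMonoid M] {g : ℕ → M} (hg : Periodic g d)
    (n : ℕ) : ∑ i ∈ range (n + d), g i = ∑ i ∈ range n, g i + ∑ i ∈ range d, g i := by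
  rw [add_comm n, sum_range_add, add_comm]
  congr 1
  exact sum_congr rfl fun i _ => by rw [add_comm, hg]

variable {R : Type*} [CommRing R] {g : ℕ → R}

theorem periodic_partialSum_discrepancy (hg : Periodic g d) :
    Periodic (fun n : ℕ => d * ∑ i ∈ range n, g i - n * ∑ i ∈ range d, g i) d := by
  intro n
  simp only [hg.sum_range_add_period, Nat.cast_add]
  ring

theorem exists_rotation_partialSum_ge [LinearOrder R] [IsStrictOrderedRing R] (hg : Periodic g d) (hd : 0 < d) :
    ∃ r, ∀ j : ℕ, j * ∑ i ∈ range d, g i ≤ d * ∑ i ∈ range j, g (r + i) := by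
  obtain ⟨r, hr⟩ := (periodic_partialSum_discrepancy hg).exists_forall_le hd
  refine ⟨r, fun j => ?_⟩
  have := hr (r + j)
  simp only [sum_range_add, Nat.cast_add] at this
  linarith

end Function.Periodic

theorem stmt_4_general (s d : ℕ) (hd : 0 < d) (f : ℕ → ℕ)
    (hsum : ∑ i ∈ Finset.range d, f i = s) :
    ∃ r : ℕ, ∀ j : ℕ, 1 ≤ j → j ≤ d →
      d * (∑ i ∈ Finset.range j, f ((i + r) % d)) ≥ j * s := by
  have hg : Function.Periodic (fun i => (f (i % d) : ℤ)) d := fun i => by simp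
  have hsum' : ∑ i ∈ range d, (f (i % d) : ℤ) = s := by
    rw [← hsum, Nat.cast_sum]
    exact sum_congr rfl fun i hi => by rw [Nat.mod_eq_of_lt (mem_range.1 hi)]
  obtain ⟨r, hr⟩ := hg.exists_rotation_partialSum_ge hd
  refine ⟨r, fun j _ _ => ?_⟩
  have := hr j
  simp only [hsum', add_comm r] at this
  exact_mod_cast this

theorem stmt_4 (s d : ℕ) (hs : 0 < s) (hd : 0 < d) (f : ℕ → ℕ)
    (hsum : ∑ i ∈ Finset.range d, f i = s) :
    ∃ r : ℕ, ∀ j : ℕ, 1 ≤ j → j ≤ d →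
      d * (∑ i ∈ Finset.range j, f ((i + r) % d)) ≥ j * s :=
  stmt_4_general s d hd f hsum
end

section
/- Let m ≥ 1. The maximum n for which there exists a coloring of the unordered pairs of n objects with m colors such that no color class contains two disjoint pairs is exactly m + 2; in particular, if n ≥ m + 3, then in every such coloring some color class contains two disjoint pairs. -/
open Finset

lemma key : ∀ m, 1 ≤ m → ∀ (α : Type) [DecidableEq α] [Fintype α],
    (∃ f : {S : Finset α // S.card = 2} → Fin m,
      ∀ S T : {S : Finset α // S.card = 2},
        S ≠ T → f S = f T → (S.1 ∩ T.1).Nonempty) →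
    Fintype.card α ≤ m + 2 := by
  intro m hm
  induction m, hm using Nat.le_induction with
  | base =>
    intro α _ _ ⟨f, hf⟩
    by_contra h
    push_neg at h
    have h4 : 4 ≤ (univ : Finset α).card := by
      rw [Finset.card_univ]; omega
    obtain ⟨s, -, hs⟩ := Finset.exists_subset_card_eq h4
    have h2 : 2 ≤ s.card := by omega
    obtain ⟨t, hts, ht⟩ := Finset.exists_subset_card_eq h2
    have hsd : (s \ t).card = 2 := by
      rw [Finset.card_sdiff_of_subset hts]; omega
    set S : {S : Finset α // S.card = 2} := ⟨t, ht⟩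
    set T : {S : Finset α // S.card = 2} := ⟨s \ t, hsd⟩
    have hdisj : t ∩ (s \ t) = ∅ := by
      simp [Finset.inter_sdiff_self]
    have hne : S ≠ T := by
      intro hST
      have : t = s \ t := congrArg Subtype.val hST
      obtain ⟨a, ha⟩ := Finset.card_pos.mp (by omega : 0 < t.card)
      have ha2 : a ∈ s \ t := this ▸ ha
      exact (Finset.mem_sdiff.mp ha2).2 ha
    have := hf S T hne (Subsingleton.elim _ _)
    rw [show (S.1 ∩ T.1) = t ∩ (s \ t) from rfl, hdisj] at this
    exact Finset.not_nonempty_empty this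
  | succ m hm ih =>
    intro α _ _ ⟨f, hf⟩
    by_contra hcon
    push_neg at hcon
    have hcard : m + 4 ≤ Fintype.card α := hcon
    by_cases hstar : ∃ c v, ∀ S, f S = c → v ∈ S.1
    · -- star case: delete vertex v
      obtain ⟨c, v, hcv⟩ := hstar
      set β := {x : α // x ≠ v} with hβ
      have hβcard : Fintype.card β = Fintype.card α - 1 := by
        have h1 := Fintype.card_subtype_compl (fun x : α => x = v)
        have h2 : Fintype.card {x : α // x = v} = 1 := Fintype.card_subtype_eq v
        rw [h2] at h1
        convert h1 using 2
      let emb : β ↪ α := Function.Embedding.subtype _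
      have hlift : ∀ S' : {S : Finset β // S.card = 2},
          (S'.1.map emb).card = 2 := fun S' => by
        rw [Finset.card_map, S'.2]
      have hvnot : ∀ S' : {S : Finset β // S.card = 2}, v ∉ S'.1.map emb := by
        intro S' hv
        obtain ⟨x, -, hx⟩ := Finset.mem_map.mp hv
        exact x.2 hx
      have hnec : ∀ S' : {S : Finset β // S.card = 2},
          f ⟨S'.1.map emb, hlift S'⟩ ≠ c := by
        intro S' h
        exact hvnot S' (hcv _ h)
      set g : {S : Finset β // S.card = 2} → Fin m :=
        fun S' => (finSuccAboveEquiv c).symm ⟨f ⟨S'.1.map emb, hlift S'⟩, hnec S'⟩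
      have hg : ∀ S' T' : {S : Finset β // S.card = 2},
          S' ≠ T' → g S' = g T' → (S'.1 ∩ T'.1).Nonempty := by
        intro S' T' hne hgeq
        have hfeq : f ⟨S'.1.map emb, hlift S'⟩ = f ⟨T'.1.map emb, hlift T'⟩ := by
          have := (finSuccAboveEquiv c).symm.injective hgeq
          exact congrArg Subtype.val this
        have hmapne : (⟨S'.1.map emb, hlift S'⟩ : {S : Finset α // S.card = 2}) ≠
            ⟨T'.1.map emb, hlift T'⟩ := by
          intro h
          apply hne
          have h1 : S'.1.map emb = T'.1.map emb := congrArg Subtype.val h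
          exact Subtype.ext (Finset.map_injective emb h1)
        have hint := hf _ _ hmapne hfeq
        simp only [← Finset.map_inter] at hint
        obtain ⟨x, hx⟩ := hint
        obtain ⟨y, hy, -⟩ := Finset.mem_map.mp hx
        exact ⟨y, hy⟩
      have := ih β ⟨g, hg⟩
      omega
    · -- no star: every color class is contained in a triangle
      push_neg at hstar
      have hαne : Nonempty α := by
        rw [← Fintype.card_pos_iff]; omega
      obtain ⟨v0⟩ := hαne
      have htri : ∀ c : Fin (m+1), ∃ t : Finset α, t.card ≤ 3 ∧
          ∀ S, f S = c → S.1 ⊆ t := by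
        intro c
        obtain ⟨S, hSc, -⟩ := hstar c v0
        obtain ⟨a, b, hab, hS⟩ := Finset.card_eq_two.mp S.2
        obtain ⟨T, hTc, haT⟩ := hstar c a
        have haS : a ∈ S.1 := by rw [hS]; simp
        have hbS : b ∈ S.1 := by rw [hS]; simp
        have hTS : T ≠ S := fun h => haT (h ▸ haS)
        have hbT : b ∈ T.1 := by
          obtain ⟨x, hx⟩ := hf T S hTS (hTc.trans hSc.symm)
          simp only [Finset.mem_inter, hS, Finset.mem_insert,
            Finset.mem_singleton] at hx
          rcases hx.2 with h | h
          · exact absurd (h ▸ hx.1) haT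
          · exact h ▸ hx.1
        obtain ⟨p, q, hpq, hT⟩ := Finset.card_eq_two.mp T.2
        have hex : ∃ c', c' ≠ b ∧ c' ≠ a ∧ T.1 = {b, c'} := by
          rw [hT] at hbT haT
          simp only [Finset.mem_insert, Finset.mem_singleton] at hbT haT
          push_neg at haT
          rcases hbT with h | h
          · refine ⟨q, fun hh => hpq (hh.trans h).symm, fun hh => haT.2 (hh ▸ rfl), ?_⟩
            rw [hT, h]
          · refine ⟨p, fun hh => hpq (hh.trans h), fun hh => haT.1 (hh ▸ rfl), ?_⟩
            rw [hT, h, Finset.pair_comm]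
        obtain ⟨c', hc'b, hc'a, hT'⟩ := hex
        obtain ⟨P, hPc, hbP⟩ := hstar c b
        have hPS : P ≠ S := fun h => hbP (h ▸ hbS)
        have hPT : P ≠ T := fun h => hbP (h ▸ (by rw [hT']; simp))
        have haP : a ∈ P.1 := by
          obtain ⟨x, hx⟩ := hf P S hPS (hPc.trans hSc.symm)
          simp only [Finset.mem_inter, hS, Finset.mem_insert,
            Finset.mem_singleton] at hx
          rcases hx.2 with h | h
          · exact h ▸ hx.1
          · exact absurd (h ▸ hx.1) hbP
        have hc'P : c' ∈ P.1 := by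
          obtain ⟨x, hx⟩ := hf P T hPT (hPc.trans hTc.symm)
          simp only [Finset.mem_inter, hT', Finset.mem_insert,
            Finset.mem_singleton] at hx
          rcases hx.2 with h | h
          · exact absurd (h ▸ hx.1) hbP
          · exact h ▸ hx.1
        have hP : ({a, c'} : Finset α) = P.1 := by
          apply Finset.eq_of_subset_of_card_le
          · rw [Finset.insert_subset_iff, Finset.singleton_subset_iff]
            exact ⟨haP, hc'P⟩
          · rw [P.2, Finset.card_pair (fun h => hc'a h.symm)]
        refine ⟨{a, b, c'}, ?_, ?_⟩
        · apply le_trans (Finset.card_insert_le _ _)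
          have := Finset.card_insert_le b ({c'} : Finset α)
          simp only [Finset.card_singleton] at this
          omega
        · intro Q hQc x hxQ
          by_contra hxt
          simp only [Finset.mem_insert, Finset.mem_singleton] at hxt
          push_neg at hxt
          have hSt : ∀ y ∈ S.1, y ∈ ({a, b, c'} : Finset α) := by
            intro y hy; rw [hS] at hy
            simp only [Finset.mem_insert, Finset.mem_singleton] at hy ⊢
            tauto
          have hTt : ∀ y ∈ T.1, y ∈ ({a, b, c'} : Finset α) := by
            intro y hy; rw [hT'] at hy
            simp only [Finset.mem_insert, Finset.mem_singleton] at hy ⊢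
            tauto
          have hPt : ∀ y ∈ P.1, y ∈ ({a, b, c'} : Finset α) := by
            intro y hy; rw [← hP] at hy
            simp only [Finset.mem_insert, Finset.mem_singleton] at hy ⊢
            tauto
          have hxnot : x ∉ ({a, b, c'} : Finset α) := by
            simp only [Finset.mem_insert, Finset.mem_singleton]
            tauto
          have herase : (Q.1.erase x).card = 1 := by
            rw [Finset.card_erase_of_mem hxQ, Q.2]
          obtain ⟨w, hw⟩ := Finset.card_eq_one.mp herase
          have hget : ∀ R : {S : Finset α // S.card = 2},
              (∀ y ∈ R.1, y ∈ ({a, b, c'} : Finset α)) → f R = c → Q ≠ R →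
              w ∈ R.1 := by
            intro R hRt hRc hQR
            obtain ⟨y, hy⟩ := hf Q R hQR (hQc.trans hRc.symm)
            rw [Finset.mem_inter] at hy
            have hyx : y ≠ x := fun h => hxnot (h ▸ hRt y hy.2)
            have : y ∈ Q.1.erase x := Finset.mem_erase.mpr ⟨hyx, hy.1⟩
            rw [hw, Finset.mem_singleton] at this
            exact this ▸ hy.2
          have hQS : Q ≠ S := fun h => hxnot (hSt x (h ▸ hxQ))
          have hQT : Q ≠ T := fun h => hxnot (hTt x (h ▸ hxQ))
          have hQP : Q ≠ P := fun h => hxnot (hPt x (h ▸ hxQ))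
          have hwS := hget S hSt hSc hQS
          have hwT := hget T hTt hTc hQT
          have hwP := hget P hPt hPc hQP
          rw [hS] at hwS; rw [hT'] at hwT; rw [← hP] at hwP
          simp only [Finset.mem_insert, Finset.mem_singleton] at hwS hwT hwP
          rcases hwS with h1 | h1
          · rcases hwT with h2 | h2
            · exact hab (by rw [← h1]; exact h2)
            · exact hc'a (by rw [← h2]; exact h1)
          · rcases hwP with h2 | h2
            · exact hab (by rw [← h2]; exact h1)
            · exact hc'b (by rw [← h2]; exact h1)
      choose t ht using htri
      have hcount : (univ : Finset {S : Finset α // S.card = 2}).card ≤ 3 * (m+1) := by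
        rw [Finset.card_eq_sum_card_fiberwise (f := f) (t := univ)
          (fun x _ => Finset.mem_univ (f x))]
        calc ∑ c ∈ univ, (univ.filter fun S => f S = c).card
            ≤ ∑ _c ∈ (univ : Finset (Fin (m+1))), 3 := by
              apply Finset.sum_le_sum
              intro c _
              have h1 : (univ.filter fun S => f S = c).card ≤
                  ((t c).powersetCard 2).card := by
                apply Finset.card_le_card_of_injOn (fun S => S.1)
                · intro S hS
                  simp only [Finset.mem_coe, Finset.mem_filter] at hS
                  rw [Finset.mem_coe, Finset.mem_powersetCard]
                  exact ⟨(ht c).2 S hS.2, S.2⟩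
                · intro S _ T _ h
                  exact Subtype.ext h
              refine h1.trans ?_
              rw [Finset.card_powersetCard]
              calc (t c).card.choose 2 ≤ Nat.choose 3 2 :=
                    Nat.choose_le_choose 2 (ht c).1
                _ = 3 := by norm_num
          _ = 3 * (m+1) := by
              rw [Finset.sum_const, Finset.card_univ, Fintype.card_fin, smul_eq_mul,
                Nat.mul_comm]
      have hpairs : (m+4).choose 2 ≤ 3 * (m+1) := by
        calc (m+4).choose 2 ≤ (Fintype.card α).choose 2 :=
              Nat.choose_le_choose 2 hcard
          _ = (univ : Finset {S : Finset α // S.card = 2}).card := by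
              rw [Finset.card_univ, Fintype.card_finset_len]
          _ ≤ 3 * (m+1) := hcount
      have harith : 3 * (m+1) < (m+4).choose 2 := by
        rw [Nat.choose_two_right]
        have h3 : m ≤ m * m := Nat.le_mul_of_pos_left m hm
        have h2 : (m+4) * (m+4-1) = m*m + 7*m + 12 := by
          have h4 : m + 4 - 1 = m + 3 := rfl
          rw [h4]; ring
        rw [h2]
        generalize m * m = p at h3 ⊢
        omega
      omega

theorem stmt_12 (m : ℕ) (hm : 1 ≤ m) (n : ℕ) :
    (∃ f : {S : Finset (Fin n) // S.card = 2} → Fin m,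
      ∀ S T : {S : Finset (Fin n) // S.card = 2},
        S ≠ T → f S = f T → (S.1 ∩ T.1).Nonempty) ↔ n ≤ m + 2 := by
  constructor
  · intro hex
    have := key m hm (Fin n) hex
    rwa [Fintype.card_fin] at this
  · intro hn
    have hSne : ∀ S : {S : Finset (Fin n) // S.card = 2}, S.1.Nonempty := by
      intro S
      rw [← Finset.card_pos, S.2]
      norm_num
    refine ⟨fun S => ⟨min (S.1.min' (hSne S)).val (m-1), by omega⟩, ?_⟩
    intro S T hST hfeq
    have hval : min (S.1.min' (hSne S)).val (m-1) =
        min (T.1.min' (hSne T)).val (m-1) := congrArg Fin.val hfeq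
    set aS := S.1.min' (hSne S) with haS
    set aT := T.1.min' (hSne T) with haT
    by_cases hlt : aS.val < m - 1
    · have : aT.val = aS.val := by omega
      have heq : aS = aT := Fin.ext this.symm
      exact ⟨aS, Finset.mem_inter.mpr ⟨Finset.min'_mem _ _,
        heq ▸ Finset.min'_mem _ _⟩⟩
    · have hS1 : m - 1 ≤ aS.val := by omega
      have hT1 : m - 1 ≤ aT.val := by omega
      set U : Finset (Fin n) := univ.filter (fun x => m - 1 ≤ x.val) with hU
      have hSU : S.1 ⊆ U := by
        intro x hx
        rw [hU, Finset.mem_filter]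
        refine ⟨Finset.mem_univ _, ?_⟩
        have := Finset.min'_le S.1 x hx
        rw [← haS, Fin.le_def] at this
        omega
      have hTU : T.1 ⊆ U := by
        intro x hx
        rw [hU, Finset.mem_filter]
        refine ⟨Finset.mem_univ _, ?_⟩
        have := Finset.min'_le T.1 x hx
        rw [← haT, Fin.le_def] at this
        omega
      have hUcard : U.card ≤ 3 := by
        have : U.card ≤ (Finset.range 3).card := by
          apply Finset.card_le_card_of_injOn (fun x => x.val - (m-1))
          · intro x hx
            rw [hU, Finset.mem_coe, Finset.mem_filter] at hx
            rw [Finset.mem_coe, Finset.mem_range]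
            show x.val - (m-1) < 3
            have := x.isLt
            omega
          · intro x hx y hy h
            rw [hU, Finset.coe_filter] at hx hy
            simp only [Set.mem_setOf_eq] at hx hy
            have h' : x.val - (m - 1) = y.val - (m - 1) := h
            apply Fin.ext
            omega
        simpa using this
      have hunion : (S.1 ∪ T.1).card ≤ 3 :=
        le_trans (Finset.card_le_card (Finset.union_subset hSU hTU)) hUcard
      have hie := Finset.card_inter_add_card_union S.1 T.1
      rw [S.2, T.2] at hie
      rw [← Finset.card_pos]
      omega
end

section
/- Let K be a totally ramified extension of ℚ₂ with ramification degree e and uniformizer π, and let d = 2m with m odd. For 1 ≤ k < e, the element (1 + π^k)^d − 1 has valuation exactly 2k. -/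
/-!
Write `(1 + π^k)^(2m) - 1 = y^m - 1` with `y = (1 + π^k)^2`. Since `2 = u π^e` and `k < e`,
`y - 1 = π^(2k) (u π^(e-k) + 1)` where the second factor is `≡ 1 (mod π)`, so `y - 1` has valuation
exactly `2k`. Raising to the odd power `m` does not change this: `y^m - 1 = (y - 1) ∑_{i<m} y^i`
and the geometric sum is `≡ m ≡ 1 (mod π)` because `y ≡ 1` and `π ∣ 2`.
-/

open Finset

section

variable {R : Type*} [CommRing R]

theorem sub_one_dvd_geom_sum_sub_natCast (y : R) (m : ℕ) :
    y - 1 ∣ ∑ i ∈ range m, y ^ i - m := by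
  have hsum : ∑ i ∈ range m, y ^ i - m = ∑ i ∈ range m, (y ^ i - 1) := by
    simp [sum_sub_distrib]
  rw [hsum]
  exact dvd_sum fun i _ => sub_one_dvd_pow_sub_one y i

theorem not_dvd_natCast_of_odd {p : R} (hp1 : ¬p ∣ 1) (hp2 : p ∣ 2) {m : ℕ} (hm : Odd m) :
    ¬p ∣ (m : R) := by
  obtain ⟨j, rfl⟩ := hm
  push_cast
  rwa [dvd_add_right (hp2.mul_right _)]

theorem one_add_pow_sq_sub_one {π u : R} {e k : ℕ} (h2 : (2 : R) = u * π ^ e) (hke : k ≤ e) :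
    (1 + π ^ k) ^ 2 - 1 = π ^ (2 * k) * (u * π ^ (e - k) + 1) := by
  rw [← Nat.add_sub_cancel' hke, pow_add] at h2
  linear_combination π ^ k * h2

theorem Prime.pow_dvd_pow_sub_one_iff [IsDomain R] {p y : R} (hp : Prime p) (hy : p ∣ y - 1)
    {m : ℕ} (hm : ¬p ∣ (m : R)) (n : ℕ) : p ^ n ∣ y ^ m - 1 ↔ p ^ n ∣ y - 1 := by
  have hgeom : ¬p ∣ ∑ i ∈ range m, y ^ i := fun h => hm <| by
    simpa using dvd_sub h (hy.trans (sub_one_dvd_geom_sum_sub_natCast y m))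
  rw [← mul_geom_sum]
  exact ⟨hp.pow_dvd_of_dvd_mul_right n hgeom, fun h => h.mul_right _⟩

end

theorem stmt_13_general (𝒪 : Type*) [CommRing 𝒪] [IsDomain 𝒪] [IsDiscreteValuationRing 𝒪]
    (π : 𝒪) (hπ : Irreducible π)
    (e : ℕ) (u : 𝒪) (h2 : (2 : 𝒪) = u * π ^ e)
    (m : ℕ) (hm : Odd m)
    (k : ℕ) (hk1 : 1 ≤ k) (hke : k < e) :
    π ^ (2 * k) ∣ (1 + π ^ k) ^ (2 * m) - 1 ∧
    ¬ π ^ (2 * k + 1) ∣ (1 + π ^ k) ^ (2 * m) - 1 := by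
  have hp : Prime π := hπ.prime
  have hsq := one_add_pow_sq_sub_one h2 hke.le
  have hπ2 : π ∣ 2 := h2 ▸ (dvd_pow_self π (by omega)).mul_left u
  have hy : π ∣ (1 + π ^ k) ^ 2 - 1 := hsq ▸ (dvd_pow_self π (by omega)).mul_right _
  have hunit : ¬π ∣ u * π ^ (e - k) + 1 := by
    rw [dvd_add_right ((dvd_pow_self π (by omega)).mul_left u)]
    exact hp.not_dvd_one
  have hmπ := not_dvd_natCast_of_odd hp.not_dvd_one hπ2 hm
  rw [pow_mul (1 + π ^ k), hp.pow_dvd_pow_sub_one_iff hy hmπ, hp.pow_dvd_pow_sub_one_iff hy hmπ,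
    hsq, pow_succ, mul_dvd_mul_iff_left (pow_ne_zero _ hp.ne_zero)]
  exact ⟨dvd_mul_right _ _, hunit⟩

/-- In the ring of integers 𝒪 of a totally ramified extension of ℚ₂ of
ramification degree e, with uniformizer π and 2 = u·π^e for a unit u, and
d = 2m with m odd: for 1 ≤ k < e the element (1 + π^k)^d − 1 has valuation
exactly 2k (it is divisible by π^{2k} but not by π^{2k+1}). -/
theorem stmt_13 (𝒪 : Type*) [CommRing 𝒪] [IsDomain 𝒪] [IsDiscreteValuationRing 𝒪]
    (π : 𝒪) (hπ : Irreducible π)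
    (hres : ∀ x : 𝒪, π ∣ x ∨ π ∣ (x - 1))
    (e : ℕ) (u : 𝒪) (hu : IsUnit u) (h2 : (2 : 𝒪) = u * π ^ e)
    (m : ℕ) (hm : Odd m)
    (k : ℕ) (hk1 : 1 ≤ k) (hke : k < e) :
    π ^ (2 * k) ∣ (1 + π ^ k) ^ (2 * m) - 1 ∧
    ¬ π ^ (2 * k + 1) ∣ (1 + π ^ k) ^ (2 * m) - 1 :=
  stmt_13_general 𝒪 π hπ e u h2 m hm k hk1 hke
end
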